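/- (Lemma: recursion for the consensus distance Ξ) Under the lower-bound, mixing, smoothness, and bounded-variance assumptions, for every round r ≥ 0 the Momentum Tracking iterates satisfy Ξ^{(r+1)} ≤ (1 − p/2) Ξ^{(r)} + (9/p)η² ℰ^{(r)} + (9/(Np))η² E‖U^{(r+1)} − D^{(r+1)}‖_F² + (9/(Np))η² E‖E^{(r+1)}‖_F². -/

import Mathlib

open MeasureTheory
open scoped BigOperators

noncomputable section

/-- Problem data and standing assumptions (lower bound, mixing, smoothness) for
decentralized optimization over `N` nodes in `ℝ^d`. -/
structure MTProblem (N d : ℕ) (Ω : Type) [mΩ : MeasurableSpace Ω] where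
  /-- Probability measure driving the stochastic gradients. -/
  μ : Measure Ω
  prob : IsProbabilityMeasure μ
  fstar : ℝ
  L : ℝ
  σ : ℝ
  p : ℝ
  β : ℝ
  /-- Local objectives `f_i`. -/
  f : Fin N → EuclideanSpace ℝ (Fin d) → ℝ
  /-- Local gradients `∇f_i`. -/
  g : Fin N → EuclideanSpace ℝ (Fin d) → EuclideanSpace ℝ (Fin d)
  /-- Mixing matrix. -/
  W : Fin N → Fin N → ℝ
  /-- Common initial parameter. -/
  x0 : EuclideanSpace ℝ (Fin d)
  hN : 0 < N
  hβ0 : 0 ≤ β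
  hβ1 : β < 1
  hL : 0 < L
  hp0 : 0 < p
  hp1 : p ≤ 1
  hgrad : ∀ i v, HasGradientAt (f i) (g i v) v
  /-- Lower bound: `f⋆ ≤ f(x)` for all `x`. -/
  hlb : ∀ v, fstar ≤ (N : ℝ)⁻¹ * ∑ i, f i v
  /-- `L`-smoothness of each `f_i`. -/
  hsmooth : ∀ i v w, ‖g i v - g i w‖ ≤ L * ‖v - w‖
  hWsymm : ∀ i j, W i j = W j i
  hWrow : ∀ i, ∑ j, W i j = 1
  hWcol : ∀ j, ∑ i, W i j = 1
  /-- Spectral gap: `‖XW − X̄‖_F² ≤ (1−p)‖X − X̄‖_F²`. -/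
  hmix : ∀ X : Fin N → EuclideanSpace ℝ (Fin d),
    ∑ j, ‖(∑ i, W i j • X i) - (N : ℝ)⁻¹ • ∑ i, X i‖ ^ 2
      ≤ (1 - p) * ∑ j, ‖X j - (N : ℝ)⁻¹ • ∑ i, X i‖ ^ 2

namespace MTProblem

variable {N d : ℕ} {Ω : Type} [mΩ : MeasurableSpace Ω]

/-- Global objective `f = (1/N) ∑_i f_i`. -/
def F (P : MTProblem N d Ω) (v : EuclideanSpace ℝ (Fin d)) : ℝ :=
  (N : ℝ)⁻¹ * ∑ i, P.f i v

/-- Gradient of the global objective, `∇f = (1/N) ∑_i ∇f_i`. -/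
def gradF (P : MTProblem N d Ω) (v : EuclideanSpace ℝ (Fin d)) : EuclideanSpace ℝ (Fin d) :=
  (N : ℝ)⁻¹ • ∑ i, P.g i v

end MTProblem

/-- A run of the Momentum Tracking algorithm: trajectories `x, u, c`, realized
stochastic gradients `G r i = ∇F_i(x_i^{(r)}; ξ_i^{(r)})`, together with the update
rules, the standard initialization, and the stochastic-gradient assumptions
(unbiasedness, bounded variance, independence across nodes and rounds in the form
of orthogonality of the noises). -/
structure MTRun {N d : ℕ} {Ω : Type} [mΩ : MeasurableSpace Ω] (P : MTProblem N d Ω) where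
  /-- Step size. -/
  η : ℝ
  hη : 0 < η
  x : ℕ → Fin N → Ω → EuclideanSpace ℝ (Fin d)
  u : ℕ → Fin N → Ω → EuclideanSpace ℝ (Fin d)
  c : ℕ → Fin N → Ω → EuclideanSpace ℝ (Fin d)
  G : ℕ → Fin N → Ω → EuclideanSpace ℝ (Fin d)
  /-- Filtration of the information available at each round. -/
  ℱ : MeasureTheory.Filtration ℕ mΩ
  hx0 : ∀ i, x 0 i = fun _ => P.x0
  hu0 : ∀ i ω, u 0 i ω = (1 - P.β)⁻¹ • (G 0 i ω - (N : ℝ)⁻¹ • ∑ j, G 0 j ω)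
  hc0 : ∀ i, c 0 i = u 0 i
  hu : ∀ r i ω, u (r + 1) i ω = P.β • u r i ω + G r i ω
  hx : ∀ r i ω, x (r + 1) i ω
      = (∑ j, P.W i j • x r j ω) - η • (u (r + 1) i ω - c r i ω)
  hc : ∀ r i ω, c (r + 1) i ω
      = (∑ j, P.W i j • (c r j ω - u (r + 1) j ω)) + u (r + 1) i ω
  hmeas : ∀ r i, MemLp (G r i) 2 P.μ
  hadapted_x : ∀ r i, StronglyMeasurable[ℱ r] (x r i)
  hadapted_G : ∀ r i, StronglyMeasurable[ℱ (r + 1)] (G r i)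
  /-- Unbiasedness: `E[∇F_i(x_i^{(r)};ξ) | ℱ_r] = ∇f_i(x_i^{(r)})`. -/
  hunbiased : ∀ r i,
    MeasureTheory.condExp (ℱ r) P.μ (G r i) =ᵐ[P.μ] fun ω => P.g i (x r i ω)
  /-- Bounded variance. -/
  hvar : ∀ r i, ∫ ω, ‖G r i ω - P.g i (x r i ω)‖ ^ 2 ∂P.μ ≤ P.σ ^ 2
  /-- Independence across nodes and rounds (orthogonality of the noises). -/
  horth : ∀ r s : ℕ, ∀ i j : Fin N, (r, i) ≠ (s, j) →
    ∫ ω, (inner ℝ (G r i ω - P.g i (x r i ω)) (G s j ω - P.g j (x s j ω)) : ℝ) ∂P.μ = 0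

namespace MTRun

variable {N d : ℕ} {Ω : Type} [mΩ : MeasurableSpace Ω] {P : MTProblem N d Ω}

/-- Node-average of the parameters, `x̄^{(r)}`. -/
def xbar (S : MTRun P) (r : ℕ) (ω : Ω) : EuclideanSpace ℝ (Fin d) :=
  (N : ℝ)⁻¹ • ∑ i, S.x r i ω

/-- Node-average of the momenta, `ū^{(r)}`. -/
def ubar (S : MTRun P) (r : ℕ) (ω : Ω) : EuclideanSpace ℝ (Fin d) :=
  (N : ℝ)⁻¹ • ∑ i, S.u r i ω

/-- Node-average of the correction variables, `c̄^{(r)}`. -/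
def cbar (S : MTRun P) (r : ℕ) (ω : Ω) : EuclideanSpace ℝ (Fin d) :=
  (N : ℝ)⁻¹ • ∑ i, S.c r i ω

/-- Auxiliary average `z̄^{(r)}`. -/
def zbar (S : MTRun P) : ℕ → Ω → EuclideanSpace ℝ (Fin d)
  | 0 => S.xbar 0
  | r + 1 => fun ω =>
      (1 - P.β)⁻¹ • S.xbar (r + 1) ω - (P.β * (1 - P.β)⁻¹) • S.xbar r ω

/-- Auxiliary sequence `d_i^{(r)}`. -/
def dseq (S : MTRun P) : ℕ → Fin N → Ω → EuclideanSpace ℝ (Fin d)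
  | 0 => fun i ω => (1 - P.β)⁻¹ • (P.g i (S.xbar 0 ω) - P.gradF (S.xbar 0 ω))
  | r + 1 => fun i ω => P.β • dseq S r i ω + P.g i (S.xbar r ω)

/-- Auxiliary sequence `e_i^{(r)}`. -/
def eseq (S : MTRun P) : ℕ → Fin N → Ω → EuclideanSpace ℝ (Fin d)
  | 0 => fun _ _ => 0
  | r + 1 => fun i ω => P.β • eseq S r i ω + P.gradF (S.xbar r ω)

/-- Node-average `d̄^{(r)}`. -/
def dbar (S : MTRun P) (r : ℕ) (ω : Ω) : EuclideanSpace ℝ (Fin d) :=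
  (N : ℝ)⁻¹ • ∑ i, S.dseq r i ω

/-- Node-average `ē^{(r)}`. -/
def ebar (S : MTRun P) (r : ℕ) (ω : Ω) : EuclideanSpace ℝ (Fin d) :=
  (N : ℝ)⁻¹ • ∑ i, S.eseq r i ω

/-- Consensus distance `Ξ^{(r)} = (1/N) E‖X^{(r)} − X̄^{(r)}‖_F²`. -/
def Xi (S : MTRun P) (r : ℕ) : ℝ :=
  (N : ℝ)⁻¹ * ∫ ω, (∑ i, ‖S.x r i ω - S.xbar r ω‖ ^ 2) ∂P.μ

/-- Tracking error `ℰ^{(r)} = (1/N) E‖D^{(r+1)} − C^{(r)} − E^{(r+1)}‖_F²`. -/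
def EE (S : MTRun P) (r : ℕ) : ℝ :=
  (N : ℝ)⁻¹ *
    ∫ ω, (∑ i, ‖S.dseq (r + 1) i ω - S.c r i ω - S.eseq (r + 1) i ω‖ ^ 2) ∂P.μ

/-- Momentum drift `𝒟^{(r)} = (1/N) E‖D^{(r+1)} − D^{(r)} − E^{(r+1)} + E^{(r)}‖_F²`. -/
def DD (S : MTRun P) (r : ℕ) : ℝ :=
  (N : ℝ)⁻¹ *
    ∫ ω, (∑ i,
      ‖S.dseq (r + 1) i ω - S.dseq r i ω - S.eseq (r + 1) i ω + S.eseq r i ω‖ ^ 2) ∂P.μ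

end MTRun

/-!
Since the mean minimises the sum of squared deviations, `Ξ^{(r+1)}` is bounded by the spread
of `X^{(r+1)}` around the old mean `x̄^{(r)}`. Each column of `X^{(r+1)} − x̄^{(r)}` is a
mixing step minus `η(u − c)`. Young's inequality with weight `p/(2−p)` turns the mixing
contraction `1 − p` into `1 − p/2` and puts the factor `2/p` on `η²‖U − C‖²`. Splitting
`U − C = (U − D) + (D − C − E) + E` costs a further factor `3`, and `6/p ≤ 9/p`.
-/

section NormInequalities

variable {E : Type*}

theorem norm_add_sq_le_young [SeminormedAddCommGroup E] (a b : E) {α : ℝ} (hα : 0 < α) :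
    ‖a + b‖ ^ 2 ≤ (1 + α) * ‖a‖ ^ 2 + (1 + α⁻¹) * ‖b‖ ^ 2 := by
  have htri : ‖a + b‖ ^ 2 ≤ (‖a‖ + ‖b‖) ^ 2 := by gcongr; exact norm_add_le a b
  have hcross : 2 * ‖a‖ * ‖b‖ ≤ α * ‖a‖ ^ 2 + α⁻¹ * ‖b‖ ^ 2 := by
    have h := mul_nonneg (inv_pos.mpr hα).le (sq_nonneg (α * ‖a‖ - ‖b‖))
    field_simp at h ⊢
    nlinarith [h]
  nlinarith [htri, hcross]

theorem norm_add₃_sq_le [SeminormedAddCommGroup E] (a b c : E) :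
    ‖a + b + c‖ ^ 2 ≤ 3 * (‖a‖ ^ 2 + ‖b‖ ^ 2 + ‖c‖ ^ 2) := by
  have htri : ‖a + b + c‖ ^ 2 ≤ (‖a‖ + ‖b‖ + ‖c‖) ^ 2 := by gcongr; exact norm_add₃_le
  nlinarith [sq_nonneg (‖a‖ - ‖b‖), sq_nonneg (‖a‖ - ‖c‖), sq_nonneg (‖b‖ - ‖c‖)]

theorem norm_sub_smul_sq_le [SeminormedAddCommGroup E] [NormedSpace ℝ E] {p : ℝ}
    (hp0 : 0 < p) (hp2 : p < 2) (η : ℝ) (y w : E) :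
    ‖y - η • w‖ ^ 2 ≤ 2 / (2 - p) * ‖y‖ ^ 2 + 2 / p * η ^ 2 * ‖w‖ ^ 2 := by
  have h2p : 0 < 2 - p := by linarith
  have h := norm_add_sq_le_young y (-(η • w)) (div_pos hp0 h2p)
  rw [← sub_eq_add_neg, norm_neg, norm_smul, Real.norm_eq_abs, mul_pow, sq_abs] at h
  convert h using 2 <;> field_simp <;> ring

variable [NormedAddCommGroup E] [InnerProductSpace ℝ E] {ι : Type*} [Fintype ι]

theorem sum_norm_sub_mean_sq_le (v : ι → E) (z : E) :
    ∑ i, ‖v i - (Fintype.card ι : ℝ)⁻¹ • ∑ j, v j‖ ^ 2 ≤ ∑ i, ‖v i - z‖ ^ 2 := by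
  rcases isEmpty_or_nonempty ι with hι | hι
  · simp
  set m : E := (Fintype.card ι : ℝ)⁻¹ • ∑ j, v j
  have hcentered : ∑ i, (v i - m) = 0 := by
    rw [Finset.sum_sub_distrib, Finset.sum_const, Finset.card_univ, ← Nat.cast_smul_eq_nsmul ℝ,
      smul_smul, mul_inv_cancel₀ (by positivity), one_smul, sub_self]
  have hsplit : ∑ i, ‖v i - z‖ ^ 2
      = ∑ i, ‖v i - m‖ ^ 2 + 2 * inner ℝ (∑ i, (v i - m)) (m - z)
        + Fintype.card ι * ‖m - z‖ ^ 2 := by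
    simp_rw [show ∀ i, v i - z = (v i - m) + (m - z) from fun i => by abel, norm_add_sq_real,
      Finset.sum_add_distrib, sum_inner, Finset.mul_sum, Finset.sum_const, Finset.card_univ,
      nsmul_eq_mul]
  rw [hsplit, hcentered, inner_zero_left, mul_zero, add_zero]
  exact le_add_of_nonneg_right (by positivity)

theorem sum_norm_sub_smul_sq_le {p η Y : ℝ} (hp0 : 0 < p) (hp1 : p ≤ 1) (y w : ι → E)
    (hY : 0 ≤ Y) (hy : ∑ i, ‖y i‖ ^ 2 ≤ (1 - p) * Y) :
    ∑ i, ‖y i - η • w i‖ ^ 2 ≤ (1 - p / 2) * Y + 2 / p * η ^ 2 * ∑ i, ‖w i‖ ^ 2 := by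
  have h2p : 0 < 2 - p := by linarith
  have hcontract : 2 / (2 - p) * (1 - p) ≤ 1 - p / 2 := by
    rw [div_mul_eq_mul_div, div_le_iff₀ h2p]
    nlinarith
  calc ∑ i, ‖y i - η • w i‖ ^ 2
      ≤ ∑ i, (2 / (2 - p) * ‖y i‖ ^ 2 + 2 / p * η ^ 2 * ‖w i‖ ^ 2) :=
        Finset.sum_le_sum fun i _ => norm_sub_smul_sq_le hp0 (by linarith) η (y i) (w i)
    _ = 2 / (2 - p) * ∑ i, ‖y i‖ ^ 2 + 2 / p * η ^ 2 * ∑ i, ‖w i‖ ^ 2 := by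
        rw [Finset.sum_add_distrib, Finset.mul_sum, Finset.mul_sum]
    _ ≤ 2 / (2 - p) * ((1 - p) * Y) + 2 / p * η ^ 2 * ∑ i, ‖w i‖ ^ 2 := by gcongr
    _ ≤ (1 - p / 2) * Y + 2 / p * η ^ 2 * ∑ i, ‖w i‖ ^ 2 := by
        rw [← mul_assoc]; gcongr

end NormInequalities

theorem integrable_sum_norm_sq {Ω E ι : Type*} [MeasurableSpace Ω] [NormedAddCommGroup E]
    [Fintype ι] {μ : Measure Ω} {f : ι → Ω → E} (hf : ∀ i, MemLp (f i) 2 μ) :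
    Integrable (fun ω => ∑ i, ‖f i ω‖ ^ 2) μ :=
  integrable_finsetSum _ fun i _ =>
    (memLp_two_iff_integrable_sq_norm (hf i).aestronglyMeasurable).1 (hf i)

namespace MTProblem

variable {N d : ℕ} {Ω : Type} [MeasurableSpace Ω] (P : MTProblem N d Ω)

instance : IsProbabilityMeasure P.μ := P.prob

theorem sum_norm_mix_sub_mean_sq_le (X : Fin N → EuclideanSpace ℝ (Fin d)) :
    ∑ i, ‖(∑ j, P.W i j • X j) - (N : ℝ)⁻¹ • ∑ j, X j‖ ^ 2
      ≤ (1 - P.p) * ∑ i, ‖X i - (N : ℝ)⁻¹ • ∑ j, X j‖ ^ 2 := by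
  simpa only [P.hWsymm] using P.hmix X

theorem lipschitzWith_g (i : Fin N) : LipschitzWith (Real.toNNReal P.L) (P.g i) :=
  LipschitzWith.of_dist_le_mul fun v w => by
    simpa [dist_eq_norm, Real.coe_toNNReal _ P.hL.le] using P.hsmooth i v w

variable {P}

theorem memLp_g_comp {f : Ω → EuclideanSpace ℝ (Fin d)} (hf : MemLp f 2 P.μ) (i : Fin N) :
    MemLp (fun ω => P.g i (f ω)) 2 P.μ := by
  have hshift : MemLp ((fun v => P.g i v - P.g i 0) ∘ f) 2 P.μ :=
    ((P.lipschitzWith_g i).sub (LipschitzWith.const _)).comp_memLp (sub_self _) hf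
  convert hshift.add (memLp_const (P.g i 0)) using 1
  ext1 ω
  simp

theorem memLp_gradF_comp {f : Ω → EuclideanSpace ℝ (Fin d)} (hf : MemLp f 2 P.μ) :
    MemLp (fun ω => P.gradF (f ω)) 2 P.μ :=
  (memLp_finsetSum Finset.univ fun i _ => memLp_g_comp hf i).const_smul (N : ℝ)⁻¹

end MTProblem

namespace MTRun

variable {N d : ℕ} {Ω : Type} [MeasurableSpace Ω] {P : MTProblem N d Ω} (S : MTRun P)

theorem memLp_x_u_c (r : ℕ) :
    (∀ i, MemLp (S.x r i) 2 P.μ) ∧ (∀ i, MemLp (S.u r i) 2 P.μ) ∧ ∀ i, MemLp (S.c r i) 2 P.μ := by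
  induction r with
  | zero =>
    have hu : ∀ i, MemLp (S.u 0 i) 2 P.μ := fun i => by
      rw [funext (S.hu0 i)]
      exact ((S.hmeas 0 i).sub ((memLp_finsetSum Finset.univ fun j _ => S.hmeas 0 j).const_smul
        (N : ℝ)⁻¹)).const_smul (1 - P.β)⁻¹
    exact ⟨fun i => S.hx0 i ▸ memLp_const _, hu, fun i => S.hc0 i ▸ hu i⟩
  | succ r ih =>
    obtain ⟨hx, hu, hc⟩ := ih
    have hu' : ∀ i, MemLp (S.u (r + 1) i) 2 P.μ := fun i => by
      rw [funext (S.hu r i)]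
      exact ((hu i).const_smul P.β).add (S.hmeas r i)
    refine ⟨fun i => ?_, hu', fun i => ?_⟩
    · rw [funext (S.hx r i)]
      exact (memLp_finsetSum Finset.univ fun j _ => (hx j).const_smul (P.W i j)).sub
        (((hu' i).sub (hc i)).const_smul S.η)
    · rw [funext (S.hc r i)]
      exact (memLp_finsetSum Finset.univ fun j _ =>
        ((hc j).sub (hu' j)).const_smul (P.W i j)).add (hu' i)

theorem memLp_xbar (r : ℕ) : MemLp (S.xbar r) 2 P.μ :=
  (memLp_finsetSum Finset.univ fun i _ => (S.memLp_x_u_c r).1 i).const_smul (N : ℝ)⁻¹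

theorem memLp_dseq (r : ℕ) (i : Fin N) : MemLp (S.dseq r i) 2 P.μ := by
  induction r with
  | zero =>
    exact ((MTProblem.memLp_g_comp (S.memLp_xbar 0) i).sub
      (MTProblem.memLp_gradF_comp (S.memLp_xbar 0))).const_smul (1 - P.β)⁻¹
  | succ r ih => exact (ih.const_smul P.β).add (MTProblem.memLp_g_comp (S.memLp_xbar r) i)

theorem memLp_eseq (r : ℕ) (i : Fin N) : MemLp (S.eseq r i) 2 P.μ := by
  induction r with
  | zero => exact memLp_const 0
  | succ r ih => exact (ih.const_smul P.β).add (MTProblem.memLp_gradF_comp (S.memLp_xbar r))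

theorem sum_norm_x_sub_xbar_sq_succ_le (r : ℕ) (ω : Ω) :
    ∑ i, ‖S.x (r + 1) i ω - S.xbar (r + 1) ω‖ ^ 2
      ≤ (1 - P.p / 2) * ∑ i, ‖S.x r i ω - S.xbar r ω‖ ^ 2
        + 9 / P.p * S.η ^ 2 * ∑ i, ‖S.dseq (r + 1) i ω - S.c r i ω - S.eseq (r + 1) i ω‖ ^ 2
        + 9 / P.p * S.η ^ 2 * ∑ i, ‖S.u (r + 1) i ω - S.dseq (r + 1) i ω‖ ^ 2
        + 9 / P.p * S.η ^ 2 * ∑ i, ‖S.eseq (r + 1) i ω‖ ^ 2 := by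
  set A := ∑ i, ‖S.dseq (r + 1) i ω - S.c r i ω - S.eseq (r + 1) i ω‖ ^ 2
  set B := ∑ i, ‖S.u (r + 1) i ω - S.dseq (r + 1) i ω‖ ^ 2
  set C := ∑ i, ‖S.eseq (r + 1) i ω‖ ^ 2
  have hrecenter : ∑ i, ‖S.x (r + 1) i ω - S.xbar (r + 1) ω‖ ^ 2
      ≤ ∑ i, ‖S.x (r + 1) i ω - S.xbar r ω‖ ^ 2 := by
    have h := sum_norm_sub_mean_sq_le (fun i => S.x (r + 1) i ω) (S.xbar r ω)
    rwa [Fintype.card_fin] at h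
  have hstep : ∑ i, ‖S.x (r + 1) i ω - S.xbar r ω‖ ^ 2
      ≤ (1 - P.p / 2) * ∑ i, ‖S.x r i ω - S.xbar r ω‖ ^ 2
        + 2 / P.p * S.η ^ 2 * ∑ i, ‖S.u (r + 1) i ω - S.c r i ω‖ ^ 2 := by
    have hx : ∀ i, S.x (r + 1) i ω - S.xbar r ω
        = ((∑ j, P.W i j • S.x r j ω) - S.xbar r ω) - S.η • (S.u (r + 1) i ω - S.c r i ω) :=
      fun i => by rw [S.hx r i ω]; abel
    simp only [hx]
    exact sum_norm_sub_smul_sq_le P.hp0 P.hp1 _ _ (by positivity)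
      (P.sum_norm_mix_sub_mean_sq_le fun j => S.x r j ω)
  have hsplit : ∑ i, ‖S.u (r + 1) i ω - S.c r i ω‖ ^ 2 ≤ 3 * (A + B + C) := by
    simp only [A, B, C, ← Finset.sum_add_distrib, Finset.mul_sum]
    refine Finset.sum_le_sum fun i _ => ?_
    have h := norm_add₃_sq_le (S.dseq (r + 1) i ω - S.c r i ω - S.eseq (r + 1) i ω)
      (S.u (r + 1) i ω - S.dseq (r + 1) i ω) (S.eseq (r + 1) i ω)
    rwa [show S.dseq (r + 1) i ω - S.c r i ω - S.eseq (r + 1) i ω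
      + (S.u (r + 1) i ω - S.dseq (r + 1) i ω) + S.eseq (r + 1) i ω
      = S.u (r + 1) i ω - S.c r i ω by abel] at h
  have hk : 0 ≤ S.η ^ 2 / P.p := div_nonneg (sq_nonneg _) P.hp0.le
  have hABC : 0 ≤ A + B + C := by positivity
  linear_combination hrecenter + hstep + 2 * mul_le_mul_of_nonneg_left hsplit hk
    + 3 * mul_nonneg hk hABC

end MTRun

/-- **Lemma** (recursion for the consensus distance `Ξ`): for every round `r ≥ 0`,
`Ξ^{(r+1)} ≤ (1 − p/2) Ξ^{(r)} + (9/p)η² ℰ^{(r)} + (9/(Np))η² E‖U^{(r+1)} − D^{(r+1)}‖_F²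
  + (9/(Np))η² E‖E^{(r+1)}‖_F²`. -/
theorem consensus_distance_recursion
    (N d : ℕ) (Ω : Type) [mΩ : MeasurableSpace Ω]
    (P : MTProblem N d Ω) (S : MTRun P) :
    ∀ r : ℕ,
      S.Xi (r + 1) ≤
        (1 - P.p / 2) * S.Xi r
          + 9 / P.p * S.η ^ 2 * S.EE r
          + 9 / ((N : ℝ) * P.p) * S.η ^ 2 *
              ∫ ω, (∑ i, ‖S.u (r + 1) i ω - S.dseq (r + 1) i ω‖ ^ 2) ∂P.μ
          + 9 / ((N : ℝ) * P.p) * S.η ^ 2 *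
              ∫ ω, (∑ i, ‖S.eseq (r + 1) i ω‖ ^ 2) ∂P.μ := by
  intro r
  obtain ⟨hx, -, hc⟩ := S.memLp_x_u_c r
  have iX : Integrable (fun ω => ∑ i, ‖S.x r i ω - S.xbar r ω‖ ^ 2) P.μ :=
    integrable_sum_norm_sq fun i => (hx i).sub (S.memLp_xbar r)
  have iA : Integrable
      (fun ω => ∑ i, ‖S.dseq (r + 1) i ω - S.c r i ω - S.eseq (r + 1) i ω‖ ^ 2) P.μ :=
    integrable_sum_norm_sq fun i =>
      ((S.memLp_dseq (r + 1) i).sub (hc i)).sub (S.memLp_eseq (r + 1) i)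
  have iB : Integrable (fun ω => ∑ i, ‖S.u (r + 1) i ω - S.dseq (r + 1) i ω‖ ^ 2) P.μ :=
    integrable_sum_norm_sq fun i => ((S.memLp_x_u_c (r + 1)).2.1 i).sub (S.memLp_dseq (r + 1) i)
  have iC : Integrable (fun ω => ∑ i, ‖S.eseq (r + 1) i ω‖ ^ 2) P.μ :=
    integrable_sum_norm_sq (S.memLp_eseq (r + 1))
  have hintegral := integral_mono_of_nonneg (ae_of_all _ fun ω => by positivity) (by fun_prop)
    (ae_of_all P.μ (S.sum_norm_x_sub_xbar_sq_succ_le r))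
  rw [integral_add (by fun_prop) (by fun_prop), integral_add (by fun_prop) (by fun_prop),
    integral_add (by fun_prop) (by fun_prop)] at hintegral
  simp only [integral_const_mul] at hintegral
  calc S.Xi (r + 1) ≤ (N : ℝ)⁻¹ * _ := mul_le_mul_of_nonneg_left hintegral (by positivity)
    _ = _ := by simp only [MTRun.Xi, MTRun.EE]; ring
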